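/- Let ε ∈ (0,1) and let 𝔚₁ = {(W_{s₁},V_{s₁})}_{s₁∈S₁} and 𝔚₂ = {(W_{s₂},V_{s₂})}_{s₂∈S₂} be two compound wiretap channels with common finite alphabets X, Y, Z such that D(𝔚₁,𝔚₂) < ε. Then for every n ∈ ℕ, every finite set U with uniform distribution, and every stochastic encoder E, the per-n compound expressions F_n(𝔚_i) = (1/n)·sup_{U,E} ( inf_{s_i∈S_i} I(U;Yⁿ_{s_i}) − sup_{s_i∈S_i} I(U;Zⁿ_{s_i}) ) satisfy |F_n(𝔚₁) − F_n(𝔚₂)| ≤ 4ε·log(|Y|·|Z|) + 8H₂(ε); consequently, the multi-letter secrecy capacities C_S(𝔚_i) = lim_{n→∞} F_n(𝔚_i) (these limits exist) satisfy |C_S(𝔚₁) − C_S(𝔚₂)| ≤ 4ε·log(|Y|·|Z|) + 8H₂(ε). -/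

import Mathlib

open Real Finset

/-- Binary entropy function (base 2). -/
noncomputable def H2 (ε : ℝ) : ℝ :=
  -(ε * Real.logb 2 ε) - (1 - ε) * Real.logb 2 (1 - ε)

/-- `p` is a probability distribution on the finite alphabet `α`. -/
def IsProb {α : Type*} [Fintype α] (p : α → ℝ) : Prop :=
  (∀ a, 0 ≤ p a) ∧ ∑ a, p a = 1

/-- `W` is a channel (stochastic matrix) from `X` to `Y`. -/
def IsChannel {X Y : Type*} [Fintype Y] (W : X → Y → ℝ) : Prop :=
  ∀ x, (∀ y, 0 ≤ W x y) ∧ ∑ y, W x y = 1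

/-- Conditional entropy `H(Y|X‖P)` (base 2) of a joint distribution `P` on `X × Y`. -/
noncomputable def condEnt {X Y : Type*} [Fintype X] [Fintype Y] (P : X × Y → ℝ) : ℝ :=
  -∑ x : X, ∑ y : Y, P (x, y) * Real.logb 2 (P (x, y) / ∑ y' : Y, P (x, y'))

/-- Mutual information `I(U;Y‖P)` (base 2) of a joint distribution `P` on `U × Y`. -/
noncomputable def mutInf {U Y : Type*} [Fintype U] [Fintype Y] (P : U × Y → ℝ) : ℝ :=
  ∑ u : U, ∑ y : Y,
    P (u, y) * Real.logb 2 (P (u, y) / ((∑ y' : Y, P (u, y')) * ∑ u' : U, P (u', y)))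

/-- Channel distance `d(W,W') = max_x ∑_y |W(y|x) − W'(y|x)|`. -/
noncomputable def dChan {X Y : Type*} [Fintype Y] (W W' : X → Y → ℝ) : ℝ :=
  ⨆ x : X, ∑ y : Y, |W x y - W' x y|

/-- Joint distribution on `U × Yⁿ` induced by the uniform distribution on `U`, a stochastic
encoder `E` and the `n`-fold memoryless extension of the channel `W`. -/
noncomputable def jointOut {X Y U : Type*} [Fintype X] [Fintype U] (n : ℕ)
    (W : X → Y → ℝ) (E : U → (Fin n → X) → ℝ) : U × (Fin n → Y) → ℝ :=
  fun p => ∑ xn : Fin n → X,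
    (∏ i : Fin n, W (xn i) (p.2 i)) * E p.1 xn * ((Fintype.card U : ℝ))⁻¹

/-- Distance `D(𝔚₁,𝔚₂)` between two compound wiretap channels. -/
noncomputable def Dcwc {X Y Z : Type*} [Fintype Y] [Fintype Z] {S₁ S₂ : Type*}
    (W₁ : S₁ → X → Y → ℝ) (V₁ : S₁ → X → Z → ℝ)
    (W₂ : S₂ → X → Y → ℝ) (V₂ : S₂ → X → Z → ℝ) : ℝ :=
  max (max (⨆ s₂ : S₂, ⨅ s₁ : S₁, dChan (W₁ s₁) (W₂ s₂))
           (⨆ s₁ : S₁, ⨅ s₂ : S₂, dChan (W₁ s₁) (W₂ s₂)))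
      (max (⨆ s₂ : S₂, ⨅ s₁ : S₁, dChan (V₁ s₁) (V₂ s₂))
           (⨆ s₁ : S₁, ⨅ s₂ : S₂, dChan (V₁ s₁) (V₂ s₂)))

/-- The per-`n` compound secrecy expression
`F_n(𝔚) = (1/n)·sup_{U,E} ( inf_s I(U;Yⁿ_s) − sup_s I(U;Zⁿ_s) )`, where the supremum ranges
over all finite auxiliary sets `U` (represented by `Fin (k+1)`) and stochastic encoders `E`. -/
noncomputable def secF {X Y Z : Type*} [Fintype X] [Fintype Y] [Fintype Z] {S : Type*}
    (W : S → X → Y → ℝ) (V : S → X → Z → ℝ) (n : ℕ) : ℝ :=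
  (1 / (n : ℝ)) * sSup {r : ℝ | ∃ (k : ℕ) (E : Fin (k + 1) → (Fin n → X) → ℝ),
    (∀ u, (∀ xn, 0 ≤ E u xn) ∧ ∑ xn : Fin n → X, E u xn = 1) ∧
    r = (⨅ s : S, mutInf (jointOut n (W s) E)) - ⨆ s : S, mutInf (jointOut n (V s) E)}

/-!
Entropies are measured in nats. Two channels at row distance `ε` share a common part:
`T = (1 - ε) R + ε T₁` and `T' = (1 - ε) R + ε T₁'`. Mixing raises entropy by at most the binary
entropy `h(ε)` and concavity bounds it from below, so with arbitrary side information the joint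
output entropies of `T` and `T'` differ by at most `ε log |Y| + h(ε)`. Swapping the `n` channel
uses one at a time gives `n (ε log |Y| + h(ε))` for the entropies of `Yⁿ` and of `(U, Yⁿ)`;
as the law of `U` is fixed, `I(U; Yⁿ)` moves by at most twice that. Every state of one compound
channel has an `ε`-close state of the other, so for each encoder the infimum over the legitimate
channels and the supremum over the eavesdropper channels move by at most this amount, and so
does `F_n`.
-/

noncomputable def entropy {α : Type*} [Fintype α] (p : α → ℝ) : ℝ := ∑ a, negMulLog (p a)

section Entropy

variable {α β : Type*} [Fintype α] [Fintype β]

lemma entropy_comp_equiv (e : α ≃ β) (p : β → ℝ) : entropy (p ∘ e) = entropy p :=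
  e.sum_comp fun b => negMulLog (p b)

lemma IsProb.le_one {p : α → ℝ} (hp : IsProb p) (a : α) : p a ≤ 1 :=
  hp.2 ▸ single_le_sum (fun b _ => hp.1 b) (mem_univ a)

lemma IsProb.snd {P : α × β → ℝ} (hP : IsProb P) : IsProb fun b => ∑ a, P (a, b) :=
  ⟨fun b => sum_nonneg fun a _ => hP.1 _, by rw [sum_comm, ← Fintype.sum_prod_type, hP.2]⟩

lemma entropy_nonneg {p : α → ℝ} (hp : IsProb p) : 0 ≤ entropy p :=
  sum_nonneg fun a _ => negMulLog_nonneg (hp.1 a) (hp.le_one a)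

lemma negMulLog_sum_le {ι : Type*} (s : Finset ι) {f : ι → ℝ} (hf : ∀ i ∈ s, 0 ≤ f i) :
    negMulLog (∑ i ∈ s, f i) ≤ ∑ i ∈ s, negMulLog (f i) := by
  rw [negMulLog, neg_mul, sum_mul, ← sum_neg_distrib]
  refine sum_le_sum fun i hi => ?_
  rcases (hf i hi).eq_or_lt with h | h
  · simp [← h]
  · rw [negMulLog, neg_mul, neg_le_neg_iff]
    exact mul_le_mul_of_nonneg_left (log_le_log h (single_le_sum hf hi)) h.le

lemma negMulLog_add_le {a b : ℝ} (ha : 0 ≤ a) (hb : 0 ≤ b) :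
    negMulLog (a + b) ≤ negMulLog a + negMulLog b := by
  simpa [Fin.sum_univ_two] using
    negMulLog_sum_le univ (f := ![a, b]) (by simp [Fin.forall_fin_two, ha, hb])

/-- Jensen's inequality for `negMulLog` with uniform weights. -/
lemma sum_negMulLog_le {f : α → ℝ} (hf : ∀ a, 0 ≤ f a) :
    ∑ a, negMulLog (f a) ≤ negMulLog (∑ a, f a) + (∑ a, f a) * log (Fintype.card α) := by
  rcases isEmpty_or_nonempty α with hα | hα
  · simp
  set N : ℝ := (Fintype.card α : ℝ)
  have hN : 0 < N := Nat.cast_pos.2 Fintype.card_pos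
  have hJ := concaveOn_negMulLog.le_map_sum (t := univ) (w := fun _ => N⁻¹) (p := f)
    (fun _ _ => by positivity) (by simp [N]) (fun a _ => Set.mem_Ici.2 (hf a))
  simp only [smul_eq_mul, ← mul_sum] at hJ
  rw [negMulLog_mul, show negMulLog N⁻¹ = -N⁻¹ * log N⁻¹ from rfl, log_inv] at hJ
  have := mul_le_mul_of_nonneg_left hJ hN.le
  field_simp at this
  linarith

lemma entropy_le_log_card {p : α → ℝ} (hp : IsProb p) : entropy p ≤ log (Fintype.card α) := by
  simpa [hp.2, entropy] using sum_negMulLog_le hp.1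

lemma entropy_fst_le {P : α × β → ℝ} (hP : ∀ p, 0 ≤ P p) :
    entropy (fun a => ∑ b, P (a, b)) ≤ entropy P := by
  rw [entropy, entropy, Fintype.sum_prod_type]
  exact sum_le_sum fun a _ => negMulLog_sum_le _ fun b _ => hP (a, b)

lemma entropy_le_entropy_fst_add {P : α × β → ℝ} (hP : IsProb P) :
    entropy P ≤ entropy (fun a => ∑ b, P (a, b)) + log (Fintype.card β) := by
  have hsum : ∑ a, ∑ b, P (a, b) = 1 := by rw [← Fintype.sum_prod_type, hP.2]
  calc entropy P = ∑ a, ∑ b, negMulLog (P (a, b)) := Fintype.sum_prod_type _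
    _ ≤ ∑ a, (negMulLog (∑ b, P (a, b)) + (∑ b, P (a, b)) * log (Fintype.card β)) :=
      sum_le_sum fun a _ => sum_negMulLog_le fun b => hP.1 (a, b)
    _ = _ := by rw [sum_add_distrib, ← sum_mul, hsum, one_mul, entropy]

lemma le_entropy_mix {a b : ℝ} (ha : 0 ≤ a) (hb : 0 ≤ b) (hab : a + b = 1) {r s : α → ℝ}
    (hr : ∀ t, 0 ≤ r t) (hs : ∀ t, 0 ≤ s t) :
    a * entropy r + b * entropy s ≤ entropy fun t => a * r t + b * s t := by
  rw [entropy, entropy, entropy, mul_sum, mul_sum, ← sum_add_distrib]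
  exact sum_le_sum fun t _ =>
    concaveOn_negMulLog.2 (Set.mem_Ici.2 (hr t)) (Set.mem_Ici.2 (hs t)) ha hb hab

lemma entropy_mix_le {a b : ℝ} (ha : 0 ≤ a) (hb : 0 ≤ b) {r s : α → ℝ}
    (hr : IsProb r) (hs : IsProb s) :
    entropy (fun t => a * r t + b * s t)
      ≤ a * entropy r + b * entropy s + negMulLog a + negMulLog b := by
  calc entropy (fun t => a * r t + b * s t)
      ≤ ∑ t, (negMulLog (a * r t) + negMulLog (b * s t)) :=
        sum_le_sum fun t _ => negMulLog_add_le (mul_nonneg ha (hr.1 t)) (mul_nonneg hb (hs.1 t))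
    _ = _ := by
      simp only [negMulLog_mul, sum_add_distrib, ← sum_mul, ← mul_sum, hr.2, hs.2, entropy]
      ring

lemma IsProb.exists_mix_of_le {p r : α → ℝ} (hp : IsProb p) (hr : IsProb r) {ε : ℝ}
    (hε : 0 < ε) (hle : ∀ a, (1 - ε) * r a ≤ p a) :
    ∃ p' : α → ℝ, IsProb p' ∧ ∀ a, p a = (1 - ε) * r a + ε * p' a := by
  refine ⟨fun a => (p a - (1 - ε) * r a) / ε,
    ⟨fun a => div_nonneg (sub_nonneg.2 (hle a)) hε.le, ?_⟩, fun a => by field_simp; ring⟩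
  rw [← sum_div, sum_sub_distrib, ← mul_sum, hp.2, hr.2]
  field_simp
  ring

/-- The common part is `min p q`, normalised; its mass is `1 - ‖p - q‖₁ / 2 ≥ 1 - ε`. -/
lemma IsProb.exists_common_mix {p q : α → ℝ} (hp : IsProb p) (hq : IsProb q) {ε : ℝ}
    (hε0 : 0 < ε) (hε1 : ε ≤ 1) (hpq : ∑ a, |p a - q a| ≤ ε) :
    ∃ r p' q' : α → ℝ, IsProb r ∧ IsProb p' ∧ IsProb q' ∧
      (∀ a, p a = (1 - ε) * r a + ε * p' a) ∧ ∀ a, q a = (1 - ε) * r a + ε * q' a := by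
  set m : α → ℝ := fun a => min (p a) (q a)
  have hm0 a : 0 ≤ m a := le_min (hp.1 a) (hq.1 a)
  have hm a : 2 * m a = p a + q a - |p a - q a| := by
    rcases le_total (p a) (q a) with h | h
    · simp only [m, min_eq_left h, abs_of_nonpos (sub_nonpos.2 h)]; ring
    · simp only [m, min_eq_right h, abs_of_nonneg (sub_nonneg.2 h)]; ring
  set c := ∑ a, m a
  have h2c : 2 * c = 2 - ∑ a, |p a - q a| := by
    rw [mul_sum, sum_congr rfl fun a _ => hm a, sum_sub_distrib, sum_add_distrib, hp.2, hq.2]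
    ring
  have hc : 1 - ε ≤ c := by linarith
  have hc0 : 0 < c := by linarith
  have hr : IsProb fun a => m a / c :=
    ⟨fun a => div_nonneg (hm0 a) hc0.le, by rw [← sum_div, div_self hc0.ne']⟩
  have hle a : (1 - ε) * (m a / c) ≤ m a := by
    rw [mul_div_assoc', div_le_iff₀ hc0, mul_comm]
    exact mul_le_mul_of_nonneg_left hc (hm0 a)
  obtain ⟨p', hp', hpdec⟩ := hp.exists_mix_of_le hr hε0 fun a => (hle a).trans (min_le_left _ _)
  obtain ⟨q', hq', hqdec⟩ := hq.exists_mix_of_le hr hε0 fun a => (hle a).trans (min_le_right _ _)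
  exact ⟨_, p', q', hr, hp', hq', hpdec, hqdec⟩

end Entropy

noncomputable def compChannel {C X Y : Type*} [Fintype X] (G : C × X → ℝ) (T : X → Y → ℝ) :
    C × Y → ℝ :=
  fun p => ∑ x, G (p.1, x) * T x p.2

section CompChannel

variable {C X Y : Type*} [Fintype X] {G : C × X → ℝ} {T T' : X → Y → ℝ}

lemma compChannel_mix {R S : X → Y → ℝ} {a b : ℝ} (hT : ∀ x y, T x y = a * R x y + b * S x y) :
    compChannel G T = fun p => a * compChannel G R p + b * compChannel G S p := by
  ext p
  simp only [compChannel, mul_sum, ← sum_add_distrib, hT]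
  exact sum_congr rfl fun x _ => by ring

variable [Fintype Y]

lemma sum_compChannel_fst (hT : IsChannel T) (c : C) :
    ∑ y, compChannel G T (c, y) = ∑ x, G (c, x) := by
  simp only [compChannel]
  rw [sum_comm]
  simp [← mul_sum, (hT _).2]

lemma sum_compChannel [Fintype C] (hT : IsChannel T) : ∑ p, compChannel G T p = ∑ p, G p := by
  simp only [Fintype.sum_prod_type, sum_compChannel_fst hT]

lemma compChannel_isProb [Fintype C] (hG : IsProb G) (hT : IsChannel T) :
    IsProb (compChannel G T) :=
  ⟨fun _ => sum_nonneg fun x _ => mul_nonneg (hG.1 _) ((hT x).1 _),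
    (sum_compChannel hT).trans hG.2⟩

/-- A conditional Fannes inequality: both joint laws mix, with weights `1 - ε` and `ε`, a common
law and remainders that have the same `C`-marginal. -/
lemma entropy_compChannel_sub_le [Fintype C] (hG : IsProb G) (hT : IsChannel T)
    (hT' : IsChannel T') {ε : ℝ} (hε0 : 0 < ε) (hε1 : ε ≤ 1)
    (hd : ∀ x, ∑ y, |T x y - T' x y| ≤ ε) :
    entropy (compChannel G T) - entropy (compChannel G T')
      ≤ ε * log (Fintype.card Y) + binEntropy ε := by
  choose R T₁ T₁' hR hT₁ hT₁' hdec hdec' using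
    fun x => IsProb.exists_common_mix (hT x) (hT' x) hε0 hε1 (hd x)
  have hup := entropy_mix_le (sub_nonneg.2 hε1) hε0.le
    (compChannel_isProb hG hR) (compChannel_isProb hG hT₁)
  have hlow := le_entropy_mix (sub_nonneg.2 hε1) hε0.le (by ring)
    (compChannel_isProb hG hR).1 (compChannel_isProb hG hT₁').1
  have h₁ : entropy (compChannel G T₁)
      ≤ entropy (fun c => ∑ x, G (c, x)) + log (Fintype.card Y) := by
    simpa only [sum_compChannel_fst hT₁] using
      entropy_le_entropy_fst_add (compChannel_isProb hG hT₁)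
  have h₁' : entropy (fun c => ∑ x, G (c, x)) ≤ entropy (compChannel G T₁') := by
    simpa only [sum_compChannel_fst hT₁'] using entropy_fst_le (compChannel_isProb hG hT₁').1
  rw [compChannel_mix hdec, compChannel_mix hdec', binEntropy_eq_negMulLog_add_negMulLog_one_sub]
  nlinarith

lemma abs_entropy_compChannel_sub_le [Fintype C] (hG : IsProb G) (hT : IsChannel T)
    (hT' : IsChannel T') {ε : ℝ} (hε0 : 0 < ε) (hε1 : ε ≤ 1)
    (hd : ∀ x, ∑ y, |T x y - T' x y| ≤ ε) :
    |entropy (compChannel G T) - entropy (compChannel G T')|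
      ≤ ε * log (Fintype.card Y) + binEntropy ε :=
  abs_sub_le_iff.2 ⟨entropy_compChannel_sub_le hG hT hT' hε0 hε1 hd,
    entropy_compChannel_sub_le hG hT' hT hε0 hε1 fun x => by simpa only [abs_sub_comm] using hd x⟩

end CompChannel

noncomputable def memorylessOut {A ι X Y : Type*} [Fintype ι] [DecidableEq ι] [Fintype X]
    (T : ι → X → Y → ℝ) (μ : A × (ι → X) → ℝ) : A × (ι → Y) → ℝ :=
  fun p => ∑ x, (∏ i, T i (x i) (p.2 i)) * μ (p.1, x)

/-- The joint law of the side information, the outputs off coordinate `j`, and the input at `j`. -/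
noncomputable def offCoordOut {A ι X Y : Type*} [Fintype ι] [DecidableEq ι] [Fintype X]
    [DecidableEq X] (j : ι) (T : {i // i ≠ j} → X → Y → ℝ) (μ : A × (ι → X) → ℝ) :
    (A × ({i // i ≠ j} → Y)) × X → ℝ :=
  fun p => ∑ x with x j = p.2, (∏ i, T i (x i) (p.1.2 i)) * μ (p.1.1, x)

def splitCoord {A ι : Type*} [DecidableEq ι] (Y : Type*) (j : ι) :
    A × (ι → Y) ≃ (A × ({i // i ≠ j} → Y)) × Y :=
  ((Equiv.refl A).prodCongr ((Equiv.funSplitAt j Y).trans (Equiv.prodComm _ _))).trans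
    (Equiv.prodAssoc _ _ _).symm

lemma sum_prod_channel {ι X Y : Type*} [Fintype ι] [DecidableEq ι] [Fintype Y]
    {T : ι → X → Y → ℝ} (hT : ∀ i, IsChannel (T i)) (x : ι → X) :
    ∑ y : ι → Y, ∏ i, T i (x i) (y i) = 1 := by
  rw [← Fintype.prod_sum]
  exact prod_eq_one fun i _ => (hT i (x i)).2

section Memoryless

variable {A ι X Y : Type*} [Fintype ι] [DecidableEq ι] [Fintype X]
  {T T' : ι → X → Y → ℝ} {μ : A × (ι → X) → ℝ}

lemma sum_memorylessOut_fst [Fintype Y] (hT : ∀ i, IsChannel (T i)) (a : A) :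
    ∑ y, memorylessOut T μ (a, y) = ∑ x, μ (a, x) := by
  simp only [memorylessOut]
  rw [sum_comm]
  simp [← sum_mul, sum_prod_channel hT]

lemma sum_memorylessOut_snd [Fintype A] (y : ι → Y) :
    ∑ a, memorylessOut T μ (a, y)
      = memorylessOut T (fun p : Unit × (ι → X) => ∑ a, μ (a, p.2)) ((), y) := by
  simp only [memorylessOut, mul_sum]
  exact sum_comm

lemma memorylessOut_isProb [Fintype A] [Fintype Y] (hT : ∀ i, IsChannel (T i))
    (hμ : IsProb μ) : IsProb (memorylessOut T μ) := by
  refine ⟨fun p => sum_nonneg fun x _ =>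
    mul_nonneg (prod_nonneg fun i _ => (hT i (x i)).1 _) (hμ.1 _), ?_⟩
  rw [Fintype.sum_prod_type]
  simp only [sum_memorylessOut_fst hT]
  rw [← Fintype.sum_prod_type, hμ.2]

lemma memorylessOut_eq_compChannel [DecidableEq X] (j : ι) :
    memorylessOut T μ
      = compChannel (offCoordOut j (fun i => T i) μ) (T j) ∘ splitCoord Y j := by
  ext ⟨a, y⟩
  simp only [memorylessOut, compChannel, offCoordOut, Function.comp_apply]
  change _ = ∑ x₀, (∑ x with x j = x₀, (∏ i : {i // i ≠ j}, T i (x i) (y i)) * μ (a, x))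
    * T j x₀ (y j)
  simp only [sum_mul]
  rw [← sum_fiberwise univ (fun x : ι → X => x j)]
  refine sum_congr rfl fun x₀ _ => sum_congr rfl fun x hx => ?_
  rw [Fintype.prod_eq_mul_prod_subtype_ne _ j, (mem_filter.1 hx).2]
  ring

lemma offCoordOut_isProb [Fintype A] [Fintype Y] [DecidableEq X] (hT : ∀ i, IsChannel (T i))
    (hμ : IsProb μ) (j : ι) : IsProb (offCoordOut j (fun i => T i) μ) := by
  refine ⟨fun p => sum_nonneg fun x _ =>
    mul_nonneg (prod_nonneg fun i _ => (hT i (x i)).1 _) (hμ.1 _), ?_⟩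
  rw [← sum_compChannel (hT j), ← (splitCoord Y j).sum_comp, ← Function.comp_def,
    ← memorylessOut_eq_compChannel, (memorylessOut_isProb hT hμ).2]

lemma abs_entropy_memorylessOut_sub_le_of_eq_of_ne [Fintype A] [Fintype Y]
    (hT : ∀ i, IsChannel (T i)) (hT' : ∀ i, IsChannel (T' i)) (hμ : IsProb μ) (j : ι)
    (hTT' : ∀ i, i ≠ j → T i = T' i) {ε : ℝ} (hε0 : 0 < ε) (hε1 : ε ≤ 1)
    (hd : ∀ x, ∑ y, |T j x y - T' j x y| ≤ ε) :
    |entropy (memorylessOut T μ) - entropy (memorylessOut T' μ)|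
      ≤ ε * log (Fintype.card Y) + binEntropy ε := by
  classical
  have hoff : offCoordOut j (fun i => T' i) μ = offCoordOut j (fun i => T i) μ := by
    simp only [fun i : {i // i ≠ j} => hTT' i i.2]
  rw [memorylessOut_eq_compChannel j, memorylessOut_eq_compChannel (T := T') j, hoff,
    entropy_comp_equiv, entropy_comp_equiv]
  exact abs_entropy_compChannel_sub_le (offCoordOut_isProb hT hμ j) (hT j) (hT' j) hε0 hε1 hd

/-- Telescoping over the hybrids that use `W'` on a growing set of coordinates and `W`
elsewhere. -/
lemma abs_entropy_memorylessOut_sub_le [Fintype A] [Fintype Y] {W W' : X → Y → ℝ}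
    (hW : IsChannel W) (hW' : IsChannel W') (hμ : IsProb μ) {ε : ℝ} (hε0 : 0 < ε)
    (hε1 : ε ≤ 1) (hd : ∀ x, ∑ y, |W x y - W' x y| ≤ ε) :
    |entropy (memorylessOut (fun _ => W) μ) - entropy (memorylessOut (fun _ => W') μ)|
      ≤ Fintype.card ι * (ε * log (Fintype.card Y) + binEntropy ε) := by
  let hybrid (s : Finset ι) : ι → X → Y → ℝ := fun i => if i ∈ s then W' else W
  have hhybrid (s : Finset ι) (i : ι) : IsChannel (hybrid s i) := by
    dsimp only [hybrid]
    split_ifs <;> assumption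
  have key (s : Finset ι) :
      |entropy (memorylessOut (hybrid ∅) μ) - entropy (memorylessOut (hybrid s) μ)|
        ≤ s.card * (ε * log (Fintype.card Y) + binEntropy ε) := by
    induction s using Finset.induction_on with
    | empty => simp
    | insert j s hj ih =>
      have hstep := abs_entropy_memorylessOut_sub_le_of_eq_of_ne (hhybrid s)
        (hhybrid (insert j s)) hμ j (fun i hi => by simp [hybrid, hi]) hε0 hε1
        (by simpa [hybrid, hj] using hd)
      rw [card_insert_of_notMem hj, Nat.cast_succ, add_mul, one_mul]
      exact (abs_sub_le _ _ _).trans (add_le_add ih hstep)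
  simpa [hybrid] using key univ

lemma abs_entropy_sum_memorylessOut_sub_le [Fintype A] [Fintype Y] {W W' : X → Y → ℝ}
    (hW : IsChannel W) (hW' : IsChannel W') (hμ : IsProb μ) {ε : ℝ} (hε0 : 0 < ε)
    (hε1 : ε ≤ 1) (hd : ∀ x, ∑ y, |W x y - W' x y| ≤ ε) :
    |entropy (fun y => ∑ a, memorylessOut (fun _ => W) μ (a, y))
      - entropy (fun y => ∑ a, memorylessOut (fun _ => W') μ (a, y))|
      ≤ Fintype.card ι * (ε * log (Fintype.card Y) + binEntropy ε) := by
  simp only [sum_memorylessOut_snd]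
  set ν : Unit × (ι → X) → ℝ := fun p => ∑ a, μ (a, p.2)
  have hν : IsProb ν :=
    ⟨fun p => hμ.snd.1 p.2, by rw [Fintype.sum_prod_type, Fintype.sum_unique]; exact hμ.snd.2⟩
  have hcol (T : ι → X → Y → ℝ) :
      entropy (fun y => memorylessOut T ν ((), y)) = entropy (memorylessOut T ν) :=
    entropy_comp_equiv (Equiv.punitProd (ι → Y)).symm (memorylessOut T ν)
  rw [hcol, hcol]
  exact abs_entropy_memorylessOut_sub_le hW hW' hν hε0 hε1 hd

end Memoryless

section MutualInformation

variable {U Y : Type*} [Fintype U] [Fintype Y]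

lemma mutInf_eq_entropy {P : U × Y → ℝ} (hP : ∀ p, 0 ≤ P p) :
    mutInf P = (entropy (fun u => ∑ y, P (u, y)) + entropy (fun y => ∑ u, P (u, y))
      - entropy P) / log 2 := by
  have hterm u y : P (u, y) * logb 2 (P (u, y) / ((∑ y', P (u, y')) * ∑ u', P (u', y)))
      = (-negMulLog (P (u, y)) - P (u, y) * log (∑ y', P (u, y'))
          - P (u, y) * log (∑ u', P (u', y))) / log 2 := by
    rcases (hP (u, y)).eq_or_lt with h | h
    · simp [← h]
    have ha : 0 < ∑ y', P (u, y') :=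
      h.trans_le (single_le_sum (fun y' _ => hP (u, y')) (mem_univ y))
    have hb : 0 < ∑ u', P (u', y) :=
      h.trans_le (single_le_sum (fun u' _ => hP (u', y)) (mem_univ u))
    rw [logb, log_div h.ne' (by positivity), log_mul ha.ne' hb.ne', negMulLog]
    ring
  simp only [mutInf, hterm, ← sum_div, sum_sub_distrib, entropy, Fintype.sum_prod_type,
    ← sum_mul]
  rw [sum_comm (f := fun u y => P (u, y) * log (∑ u', P (u', y)))]
  simp only [← sum_mul, negMulLog, neg_mul, sum_neg_distrib]
  ring

lemma abs_mutInf_le {P : U × Y → ℝ} (hP : IsProb P) :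
    |mutInf P| ≤ logb 2 (Fintype.card Y) := by
  have h₁ := entropy_fst_le hP.1
  have h₂ := entropy_le_entropy_fst_add hP
  have h₃ := entropy_nonneg hP.snd
  have h₄ := entropy_le_log_card hP.snd
  have hlog : 0 < log 2 := log_pos one_lt_two
  rw [mutInf_eq_entropy hP.1, logb, abs_div, abs_of_pos hlog]
  exact div_le_div_of_nonneg_right (abs_le.2 ⟨by linarith, by linarith⟩) hlog.le

end MutualInformation

section Channels

variable {X Y : Type*} [Fintype Y]

lemma dChan_comm (W W' : X → Y → ℝ) : dChan W W' = dChan W' W := by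
  simp only [dChan, abs_sub_comm]

lemma dChan_nonneg (W W' : X → Y → ℝ) : 0 ≤ dChan W W' :=
  Real.iSup_nonneg fun _ => sum_nonneg fun _ _ => abs_nonneg _

lemma dChan_le_two {W W' : X → Y → ℝ} (hW : IsChannel W) (hW' : IsChannel W') :
    dChan W W' ≤ 2 := by
  refine Real.iSup_le (fun x => ?_) zero_le_two
  calc ∑ y, |W x y - W' x y| ≤ ∑ y, (W x y + W' x y) :=
        sum_le_sum fun y _ => (abs_sub _ _).trans_eq
          (by rw [abs_of_nonneg ((hW x).1 y), abs_of_nonneg ((hW' x).1 y)])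
    _ = 2 := by rw [sum_add_distrib, (hW x).2, (hW' x).2]; norm_num

lemma sum_abs_sub_le_dChan [Finite X] (W W' : X → Y → ℝ) (x : X) :
    ∑ y, |W x y - W' x y| ≤ dChan W W' :=
  le_ciSup (f := fun x => ∑ y, |W x y - W' x y|) (Finite.bddAbove_range _) x

lemma IsChannel.nonempty {W : X → Y → ℝ} (hW : IsChannel W) (x : X) : Nonempty Y :=
  (isEmpty_or_nonempty Y).resolve_left fun _ => by simpa using (hW x).2

lemma forall_exists_dChan_le_of_iSup_iInf_lt {S₁ S₂ : Type*} [Nonempty S₂]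
    {W₁ : S₁ → X → Y → ℝ} {W₂ : S₂ → X → Y → ℝ} (hW₁ : ∀ s, IsChannel (W₁ s))
    (hW₂ : ∀ s, IsChannel (W₂ s)) {ε : ℝ} (h : ⨆ s₁, ⨅ s₂, dChan (W₁ s₁) (W₂ s₂) < ε)
    (s₁ : S₁) : ∃ s₂, dChan (W₁ s₁) (W₂ s₂) ≤ ε := by
  have hbdd s : BddBelow (Set.range (fun s₂ => dChan (W₁ s) (W₂ s₂))) :=
    ⟨0, Set.forall_mem_range.2 fun _ => dChan_nonneg _ _⟩
  obtain ⟨s₂₀⟩ := ‹Nonempty S₂›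
  have hinf : ⨅ s₂, dChan (W₁ s₁) (W₂ s₂) < ε := by
    refine (le_ciSup ⟨2, Set.forall_mem_range.2 fun s => ?_⟩ s₁).trans_lt h
    exact (ciInf_le (hbdd s) s₂₀).trans (dChan_le_two (hW₁ s) (hW₂ s₂₀))
  exact (exists_lt_of_ciInf_lt hinf).imp fun _ => le_of_lt

end Channels

section Comparison

variable {ι κ : Type*} {f : ι → ℝ} {g : κ → ℝ} {δ : ℝ}

lemma ciInf_le_ciInf_add [Nonempty ι] (hg : BddBelow (Set.range g))
    (h : ∀ i, ∃ k, g k ≤ f i + δ) : ⨅ k, g k ≤ (⨅ i, f i) + δ :=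
  sub_le_iff_le_add.1 <| le_ciInf fun i =>
    let ⟨k, hk⟩ := h i
    sub_le_iff_le_add.2 ((ciInf_le hg k).trans hk)

lemma ciSup_le_ciSup_add [Nonempty ι] (hg : BddAbove (Set.range g))
    (h : ∀ i, ∃ k, f i ≤ g k + δ) : ⨆ i, f i ≤ (⨆ k, g k) + δ :=
  ciSup_le fun i =>
    let ⟨k, hk⟩ := h i
    hk.trans (add_le_add (le_ciSup hg k) le_rfl)

lemma sSup_image_le_sSup_image_add {s : Set ι} {g : ι → ℝ} (hf : BddAbove (f '' s))
    (hδ : 0 ≤ δ) (h : ∀ i ∈ s, g i ≤ f i + δ) : sSup (g '' s) ≤ sSup (f '' s) + δ := by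
  rcases s.eq_empty_or_nonempty with rfl | hs
  · simpa using hδ
  exact csSup_le (hs.image g) (Set.forall_mem_image.2 fun i hi =>
    (h i hi).trans (add_le_add (le_csSup hf (Set.mem_image_of_mem f hi)) le_rfl))

end Comparison

lemma H2_eq_binEntropy_div (ε : ℝ) : H2 ε = binEntropy ε / log 2 := by
  simp only [H2, logb, binEntropy_eq_negMulLog_add_negMulLog_one_sub, negMulLog]
  ring

lemma H2_nonneg {ε : ℝ} (hε0 : 0 ≤ ε) (hε1 : ε ≤ 1) : 0 ≤ H2 ε := by
  rw [H2_eq_binEntropy_div]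
  exact div_nonneg (binEntropy_nonneg hε0 hε1) (log_nonneg one_le_two)

lemma logb_two_natCast_nonneg (m : ℕ) : 0 ≤ logb 2 m :=
  div_nonneg (log_natCast_nonneg m) (log_nonneg one_le_two)

noncomputable def encoderLaw {U V : Type*} [Fintype U] (E : U → V → ℝ) : U × V → ℝ :=
  fun p => E p.1 p.2 * (Fintype.card U : ℝ)⁻¹

lemma encoderLaw_isProb {U V : Type*} [Fintype U] [Nonempty U] [Fintype V] {E : U → V → ℝ}
    (hE : ∀ u, IsProb (E u)) : IsProb (encoderLaw E) := by
  refine ⟨fun p => mul_nonneg ((hE p.1).1 p.2) (by positivity), ?_⟩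
  simp only [encoderLaw, Fintype.sum_prod_type, ← sum_mul, (hE _).2, sum_const, card_univ,
    nsmul_eq_mul, mul_one]
  exact mul_inv_cancel₀ (Nat.cast_ne_zero.2 Fintype.card_ne_zero)

lemma jointOut_eq_memorylessOut {U X Y : Type*} [Fintype U] [Fintype X] {n : ℕ}
    (W : X → Y → ℝ) (E : U → (Fin n → X) → ℝ) :
    jointOut n W E = memorylessOut (fun _ => W) (encoderLaw E) := by
  ext p
  simp only [jointOut, memorylessOut, encoderLaw, mul_assoc]

section JointOut

variable {U X Y : Type*} [Fintype U] [Nonempty U] [Fintype X] [Fintype Y] {n : ℕ}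
  {E : U → (Fin n → X) → ℝ}

lemma jointOut_isProb {W : X → Y → ℝ} (hW : IsChannel W) (hE : ∀ u, IsProb (E u)) :
    IsProb (jointOut n W E) := by
  rw [jointOut_eq_memorylessOut]
  exact memorylessOut_isProb (fun _ => hW) (encoderLaw_isProb hE)

lemma abs_mutInf_jointOut_sub_le {W W' : X → Y → ℝ} (hW : IsChannel W) (hW' : IsChannel W')
    (hE : ∀ u, IsProb (E u)) {ε : ℝ} (hε0 : 0 < ε) (hε1 : ε ≤ 1) (hWW' : dChan W W' ≤ ε) :
    |mutInf (jointOut n W E) - mutInf (jointOut n W' E)|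
      ≤ 2 * n * (ε * logb 2 (Fintype.card Y) + H2 ε) := by
  have hd x := (sum_abs_sub_le_dChan W W' x).trans hWW'
  have hμ := encoderLaw_isProb hE
  have hjoint := abs_entropy_memorylessOut_sub_le hW hW' hμ hε0 hε1 hd
  have hout := abs_entropy_sum_memorylessOut_sub_le hW hW' hμ hε0 hε1 hd
  rw [Fintype.card_fin] at hjoint hout
  obtain ⟨h₁, h₂⟩ := abs_le.1 hjoint
  obtain ⟨h₃, h₄⟩ := abs_le.1 hout
  have hlog : 0 < log 2 := log_pos one_lt_two
  rw [jointOut_eq_memorylessOut, jointOut_eq_memorylessOut,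
    mutInf_eq_entropy (memorylessOut_isProb (fun _ => hW) hμ).1,
    mutInf_eq_entropy (memorylessOut_isProb (fun _ => hW') hμ).1]
  simp only [sum_memorylessOut_fst (fun _ => hW), sum_memorylessOut_fst (fun _ => hW')]
  rw [show 2 * n * (ε * logb 2 (Fintype.card Y) + H2 ε)
      = 2 * (n * (ε * log (Fintype.card Y) + binEntropy ε)) / log 2 by
    rw [H2_eq_binEntropy_div, logb]; ring, ← sub_div, abs_div, abs_of_pos hlog]
  exact div_le_div_of_nonneg_right (abs_le.2 ⟨by linarith, by linarith⟩) hlog.le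

end JointOut

def encoders (X : Type*) [Fintype X] (n : ℕ) : Set (Σ k : ℕ, Fin (k + 1) → (Fin n → X) → ℝ) :=
  {E | ∀ u, IsProb (E.2 u)}

noncomputable def secrecyRate {X Y Z S : Type*} [Fintype X] [Fintype Y] [Fintype Z]
    (W : S → X → Y → ℝ) (V : S → X → Z → ℝ) (n : ℕ)
    (E : Σ k : ℕ, Fin (k + 1) → (Fin n → X) → ℝ) : ℝ :=
  (⨅ s, mutInf (jointOut n (W s) E.2)) - ⨆ s, mutInf (jointOut n (V s) E.2)

section Secrecy

variable {X Y Z : Type*} [Fintype X] [Fintype Y] [Fintype Z] {S S₁ S₂ : Type*} {n : ℕ}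

lemma secF_eq_sSup_image (W : S → X → Y → ℝ) (V : S → X → Z → ℝ) (n : ℕ) :
    secF W V n = 1 / n * sSup (secrecyRate W V n '' encoders X n) := by
  unfold secF
  congr 2
  ext r
  simp [encoders, secrecyRate, IsProb, Sigma.exists, eq_comm]

lemma encoders_eq_empty [IsEmpty X] (hn : 0 < n) : encoders X n = ∅ := by
  have : IsEmpty (Fin n → X) := ⟨fun x => isEmptyElim (x ⟨0, hn⟩)⟩
  exact Set.eq_empty_of_forall_notMem fun E hE => by simpa using (hE 0).2

lemma bddBelow_range_mutInf_jointOut {U : Type*} [Fintype U] [Nonempty U]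
    {W : S → X → Y → ℝ} (hW : ∀ s, IsChannel (W s)) {E : U → (Fin n → X) → ℝ}
    (hE : ∀ u, IsProb (E u)) : BddBelow (Set.range fun s => mutInf (jointOut n (W s) E)) :=
  ⟨_, Set.forall_mem_range.2 fun s => (abs_le.1 (abs_mutInf_le (jointOut_isProb (hW s) hE))).1⟩

lemma bddAbove_range_mutInf_jointOut {U : Type*} [Fintype U] [Nonempty U]
    {W : S → X → Y → ℝ} (hW : ∀ s, IsChannel (W s)) {E : U → (Fin n → X) → ℝ}
    (hE : ∀ u, IsProb (E u)) : BddAbove (Set.range fun s => mutInf (jointOut n (W s) E)) :=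
  ⟨_, Set.forall_mem_range.2 fun s => (abs_le.1 (abs_mutInf_le (jointOut_isProb (hW s) hE))).2⟩

lemma secrecyRate_le [Nonempty S] {W : S → X → Y → ℝ} {V : S → X → Z → ℝ}
    (hW : ∀ s, IsChannel (W s)) (hV : ∀ s, IsChannel (V s)) {E} (hE : E ∈ encoders X n) :
    secrecyRate W V n E
      ≤ logb 2 (Fintype.card (Fin n → Y)) + logb 2 (Fintype.card (Fin n → Z)) := by
  obtain ⟨s⟩ := ‹Nonempty S›
  have hWs := (abs_le.1 (abs_mutInf_le (jointOut_isProb (hW s) hE))).2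
  have hVs := (abs_le.1 (abs_mutInf_le (jointOut_isProb (hV s) hE))).1
  have := ciInf_le (bddBelow_range_mutInf_jointOut hW hE) s
  have := le_ciSup (bddAbove_range_mutInf_jointOut hV hE) s
  rw [secrecyRate]
  linarith

variable [Nonempty S₁]
  {W₁ : S₁ → X → Y → ℝ} {V₁ : S₁ → X → Z → ℝ} {W₂ : S₂ → X → Y → ℝ} {V₂ : S₂ → X → Z → ℝ}

lemma secrecyRate_le_add (hW₁ : ∀ s, IsChannel (W₁ s)) (hV₁ : ∀ s, IsChannel (V₁ s))
    (hW₂ : ∀ s, IsChannel (W₂ s)) (hV₂ : ∀ s, IsChannel (V₂ s)) {ε : ℝ} (hε0 : 0 < ε)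
    (hε1 : ε ≤ 1) (hW : ∀ s₁, ∃ s₂, dChan (W₁ s₁) (W₂ s₂) ≤ ε)
    (hV : ∀ s₁, ∃ s₂, dChan (V₁ s₁) (V₂ s₂) ≤ ε) {E} (hE : E ∈ encoders X n) :
    secrecyRate W₂ V₂ n E ≤ secrecyRate W₁ V₁ n E
      + n * (2 * (ε * logb 2 (Fintype.card Y) + H2 ε)
        + 2 * (ε * logb 2 (Fintype.card Z) + H2 ε)) := by
  have hinf : ⨅ s₂, mutInf (jointOut n (W₂ s₂) E.2)
      ≤ (⨅ s₁, mutInf (jointOut n (W₁ s₁) E.2))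
        + 2 * n * (ε * logb 2 (Fintype.card Y) + H2 ε) :=
    ciInf_le_ciInf_add (bddBelow_range_mutInf_jointOut hW₂ hE) fun s₁ =>
      (hW s₁).imp fun s₂ hs₂ => by
        linarith [abs_le.1 (abs_mutInf_jointOut_sub_le (hW₁ s₁) (hW₂ s₂) hE hε0 hε1 hs₂)]
  have hsup : ⨆ s₁, mutInf (jointOut n (V₁ s₁) E.2)
      ≤ (⨆ s₂, mutInf (jointOut n (V₂ s₂) E.2))
        + 2 * n * (ε * logb 2 (Fintype.card Z) + H2 ε) :=
    ciSup_le_ciSup_add (bddAbove_range_mutInf_jointOut hV₂ hE) fun s₁ =>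
      (hV s₁).imp fun s₂ hs₂ => by
        linarith [abs_le.1 (abs_mutInf_jointOut_sub_le (hV₁ s₁) (hV₂ s₂) hE hε0 hε1 hs₂)]
  rw [secrecyRate, secrecyRate]
  linarith

lemma secF_le_secF_add [Nonempty S₂] (hW₁ : ∀ s, IsChannel (W₁ s)) (hV₁ : ∀ s, IsChannel (V₁ s))
    (hW₂ : ∀ s, IsChannel (W₂ s)) (hV₂ : ∀ s, IsChannel (V₂ s)) {ε : ℝ} (hε0 : 0 < ε)
    (hε1 : ε ≤ 1) (hW : ⨆ s₁, ⨅ s₂, dChan (W₁ s₁) (W₂ s₂) < ε)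
    (hV : ⨆ s₁, ⨅ s₂, dChan (V₁ s₁) (V₂ s₂) < ε) :
    secF W₂ V₂ n ≤ secF W₁ V₁ n
      + (2 * (ε * logb 2 (Fintype.card Y) + H2 ε)
        + 2 * (ε * logb 2 (Fintype.card Z) + H2 ε)) := by
  set D := 2 * (ε * logb 2 (Fintype.card Y) + H2 ε) + 2 * (ε * logb 2 (Fintype.card Z) + H2 ε)
  have hD : 0 ≤ D := by
    have := H2_nonneg hε0.le hε1
    have := logb_two_natCast_nonneg (Fintype.card Y)
    have := logb_two_natCast_nonneg (Fintype.card Z)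
    positivity
  have hsSup := sSup_image_le_sSup_image_add
    ⟨_, Set.forall_mem_image.2 fun E hE => secrecyRate_le hW₁ hV₁ hE⟩ (by positivity : 0 ≤ n * D)
    fun E hE => secrecyRate_le_add hW₁ hV₁ hW₂ hV₂ hε0 hε1
      (forall_exists_dChan_le_of_iSup_iInf_lt hW₁ hW₂ hW)
      (forall_exists_dChan_le_of_iSup_iInf_lt hV₁ hV₂ hV) hE
  rw [secF_eq_sSup_image, secF_eq_sSup_image]
  rcases n.eq_zero_or_pos with rfl | hn
  · simpa using hD
  calc 1 / (n : ℝ) * sSup (secrecyRate W₂ V₂ n '' encoders X n)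
      ≤ 1 / n * (sSup (secrecyRate W₁ V₁ n '' encoders X n) + n * D) :=
        mul_le_mul_of_nonneg_left hsSup (by positivity)
    _ = 1 / n * sSup (secrecyRate W₁ V₁ n '' encoders X n) + D := by field_simp

lemma abs_secF_sub_le [Nonempty S₂] (hW₁ : ∀ s, IsChannel (W₁ s)) (hV₁ : ∀ s, IsChannel (V₁ s))
    (hW₂ : ∀ s, IsChannel (W₂ s)) (hV₂ : ∀ s, IsChannel (V₂ s)) {ε : ℝ} (hε0 : 0 < ε)
    (hε1 : ε ≤ 1) (hD : Dcwc W₁ V₁ W₂ V₂ < ε) (hn : 0 < n) :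
    |secF W₁ V₁ n - secF W₂ V₂ n|
      ≤ 2 * ε * logb 2 (Fintype.card Y * Fintype.card Z) + 4 * H2 ε := by
  have hH2 := H2_nonneg hε0.le hε1
  rcases isEmpty_or_nonempty X with hX | ⟨⟨x⟩⟩
  · have := logb_two_natCast_nonneg (Fintype.card Y * Fintype.card Z)
    push_cast at this
    simp only [secF_eq_sSup_image, encoders_eq_empty hn, Set.image_empty, Real.sSup_empty,
      mul_zero, sub_self, abs_zero]
    positivity
  obtain ⟨s⟩ := ‹Nonempty S₁›
  have := (hW₁ s).nonempty x
  have := (hV₁ s).nonempty x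
  obtain ⟨⟨hW₂₁, hW₁₂⟩, hV₂₁, hV₁₂⟩ := by simpa only [Dcwc, max_lt_iff] using hD
  have h₁₂ := secF_le_secF_add (n := n) hW₁ hV₁ hW₂ hV₂ hε0 hε1 hW₁₂ hV₁₂
  have h₂₁ := secF_le_secF_add (n := n) hW₂ hV₂ hW₁ hV₁ hε0 hε1
    (by simpa only [dChan_comm (W₁ _)] using hW₂₁) (by simpa only [dChan_comm (V₁ _)] using hV₂₁)
  rw [logb_mul (Nat.cast_ne_zero.2 Fintype.card_ne_zero) (Nat.cast_ne_zero.2 Fintype.card_ne_zero)]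
  exact abs_sub_le_iff.2 ⟨by linarith, by linarith⟩

end Secrecy

/-- continuity of the compound wiretap secrecy capacity in the uncertainty set. -/
theorem compound_secrecy_capacity_continuity {X Y Z : Type*}
    [Fintype X] [Fintype Y] [Fintype Z] {S₁ S₂ : Type*} [Nonempty S₁] [Nonempty S₂]
    {ε : ℝ} (hε : ε ∈ Set.Ioo (0 : ℝ) 1)
    (W₁ : S₁ → X → Y → ℝ) (V₁ : S₁ → X → Z → ℝ)
    (W₂ : S₂ → X → Y → ℝ) (V₂ : S₂ → X → Z → ℝ)
    (hW₁ : ∀ s, IsChannel (W₁ s)) (hV₁ : ∀ s, IsChannel (V₁ s))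
    (hW₂ : ∀ s, IsChannel (W₂ s)) (hV₂ : ∀ s, IsChannel (V₂ s))
    (hD : Dcwc W₁ V₁ W₂ V₂ < ε) :
    (∀ n : ℕ, 0 < n →
      |secF W₁ V₁ n - secF W₂ V₂ n| ≤
        4 * ε * Real.logb 2 ((Fintype.card Y : ℝ) * (Fintype.card Z : ℝ)) + 8 * H2 ε) ∧
    (∀ C₁ C₂ : ℝ,
      Filter.Tendsto (fun n : ℕ => secF W₁ V₁ n) Filter.atTop (nhds C₁) →
      Filter.Tendsto (fun n : ℕ => secF W₂ V₂ n) Filter.atTop (nhds C₂) →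
      |C₁ - C₂| ≤
        4 * ε * Real.logb 2 ((Fintype.card Y : ℝ) * (Fintype.card Z : ℝ)) + 8 * H2 ε) := by
  obtain ⟨hε0, hε1⟩ := hε
  have hlog := logb_two_natCast_nonneg (Fintype.card Y * Fintype.card Z)
  push_cast at hlog
  have hH2 := H2_nonneg hε0.le hε1.le
  have hfinite (n : ℕ) (hn : 0 < n) :
      |secF W₁ V₁ n - secF W₂ V₂ n| ≤
        4 * ε * logb 2 ((Fintype.card Y : ℝ) * (Fintype.card Z : ℝ)) + 8 * H2 ε :=
    (abs_secF_sub_le hW₁ hV₁ hW₂ hV₂ hε0 hε1.le hD hn).trans (by nlinarith)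
  exact ⟨hfinite, fun C₁ C₂ h₁ h₂ =>
    le_of_tendsto (h₁.sub h₂).abs (Filter.eventually_atTop.2 ⟨1, hfinite⟩)⟩
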